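/- Let V : ℝ → ℝ be twice continuously differentiable on [0,∞) with V(0) = 1, V'(0) = 0, V, V', V'' integrable on (0,∞), and V(x) → 0, V'(x) → 0 as x → ∞. Then 4z² · V̂(2z) · V̂(−2z) = 1 + o(1/z) as real z → ∞, where V̂(z) = ∫_0^∞ V(x) e^{-izx} dx; more precisely, z · ( 4z² · V̂(2z) · V̂(−2z) − 1 ) → 0 as z → ∞ through real values. -/

import Mathlib

/-!
Integrating by parts twice, the boundary terms `V 0 = 1` and `V' 0 = 0` give
`V̂ t = (1 + W t / (I t)) / (I t)` for `t ≠ 0`, where `W` is the half-line transform of `V''`.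
Substituting `t = ±2z`, the quantity `z (4 z² V̂(2z) V̂(-2z) - 1)` equals
`I (W(-2z) - W(2z)) / 2 + W(2z) W(-2z) / (4z)`, which tends to `0` because `W(±2z) → 0` by the
Riemann–Lebesgue lemma.
-/

open Complex MeasureTheory Filter Set Topology
open scoped Real FourierTransform

noncomputable def halfLineFourier (f : ℝ → ℂ) (t : ℝ) : ℂ :=
  ∫ x in Ioi (0 : ℝ), f x * exp (-I * t * x)

theorem halfLineFourier_eq_fourier (f : ℝ → ℂ) (t : ℝ) :
    halfLineFourier f t = 𝓕 ((Ioi 0).indicator f) (t / (2 * π)) := by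
  rw [Real.fourier_real_eq_integral_exp_smul, halfLineFourier,
    ← integral_indicator measurableSet_Ioi]
  congr 1 with x
  by_cases hx : x ∈ Ioi (0 : ℝ)
  · rw [indicator_of_mem hx, indicator_of_mem hx, smul_eq_mul, mul_comm]
    congr 2
    push_cast
    field_simp
  · simp [indicator_of_notMem hx]

theorem tendsto_halfLineFourier_cocompact (f : ℝ → ℂ) :
    Tendsto (halfLineFourier f) (cocompact ℝ) (𝓝 0) := by
  have hscale : Tendsto (fun t : ℝ => t / (2 * π)) (cocompact ℝ) (cocompact ℝ) :=
    tendsto_cocompact_mul_right₀ (inv_ne_zero (by positivity))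
  exact ((Real.zero_at_infty_fourier _).comp hscale).congr fun t =>
    (halfLineFourier_eq_fourier f t).symm

-- The boundary term at `∞` vanishes because `f` and `f'` integrable force `f → 0`.
theorem halfLineFourier_eq_of_hasDerivAt {f f' : ℝ → ℂ} {t : ℝ} (ht : t ≠ 0)
    (hf : ∀ x ∈ Ioi 0, HasDerivAt f (f' x) x) (hf0 : ContinuousWithinAt f (Ici 0) 0)
    (hfi : IntegrableOn f (Ioi 0)) (hf'i : IntegrableOn f' (Ioi 0)) :
    halfLineFourier f t = (f 0 + halfLineFourier f' t) / (I * t) := by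
  set c : ℂ := -I * t
  have hc : c ≠ 0 := by simp [c, ht]
  set v : ℝ → ℂ := fun x => exp (c * x) / c
  have hv (x : ℝ) : HasDerivAt v (exp (c * x)) x := by
    have h := (((hasDerivAt_id' x).ofReal_comp.const_mul c).cexp).div_const c
    rwa [ofReal_one, mul_one, mul_div_cancel_right₀ _ hc] at h
  have hv_cont : Continuous v := by fun_prop
  have hv_norm (x : ℝ) : ‖v x‖ = ‖c‖⁻¹ := by
    simp [v, c, norm_exp]
  have hexp_norm (x : ℝ) : ‖exp (c * x)‖ = 1 := by
    simp [c, norm_exp]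
  have hfv : Tendsto (f * v) (𝓝[>] 0) (𝓝 (f 0 * v 0)) :=
    ((hf0.mono Ioi_subset_Ici_self).mul hv_cont.continuousWithinAt).tendsto
  have hfv_top : Tendsto (f * v) atTop (𝓝 0) :=
    (tendsto_zero_of_hasDerivAt_of_integrableOn_Ioi hf hf'i hfi).zero_mul_isBoundedUnder_le
      ⟨‖c‖⁻¹, eventually_map.mpr (Eventually.of_forall fun x => (hv_norm x).le)⟩
  have hibp := integral_Ioi_mul_deriv_eq_deriv_mul hf (fun x _ => hv x)
    (hfi.mul_bdd (by fun_prop) (Eventually.of_forall fun x => (hexp_norm x).le))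
    (hf'i.mul_bdd hv_cont.aestronglyMeasurable (Eventually.of_forall fun x => (hv_norm x).le))
    hfv hfv_top
  simp only [v, ← mul_div_assoc, integral_div, ofReal_zero, mul_zero, Complex.exp_zero]
    at hibp
  rw [halfLineFourier, halfLineFourier, hibp]
  simp only [c]
  field_simp
  ring

theorem DifferentiableOn.hasDerivAt_derivWithin_Ici {E : Type*} [NormedAddCommGroup E]
    [NormedSpace ℝ E] {f : ℝ → E} {a x : ℝ} (hf : DifferentiableOn ℝ f (Ici a))
    (hx : a < x) :
    HasDerivAt f (derivWithin f (Ici a) x) x := by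
  rw [derivWithin_of_mem_nhds (Ici_mem_nhds hx)]
  exact (hf.differentiableAt (Ici_mem_nhds hx)).hasDerivAt

theorem halfLineFourier_ofReal_eq_of_differentiableOn {f : ℝ → ℝ} {t : ℝ} (ht : t ≠ 0)
    (hf : DifferentiableOn ℝ f (Ici 0)) (hfi : IntegrableOn f (Ioi 0))
    (hf'i : IntegrableOn (derivWithin f (Ici 0)) (Ioi 0)) :
    halfLineFourier (fun x => (f x : ℂ)) t
      = ((f 0 : ℂ) + halfLineFourier (fun x => ((derivWithin f (Ici 0) x : ℝ) : ℂ)) t)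
        / (I * t) :=
  halfLineFourier_eq_of_hasDerivAt ht
    (fun _ hx => (hf.hasDerivAt_derivWithin_Ici hx).ofReal_comp)
    (continuous_ofReal.continuousAt.comp_continuousWithinAt (hf.continuousOn 0 self_mem_Ici))
    hfi.ofReal hf'i.ofReal

theorem halfLineFourier_ofReal_eq_of_contDiffOn_two {V : ℝ → ℝ} {t : ℝ} (ht : t ≠ 0)
    (hV : ContDiffOn ℝ 2 V (Ici 0)) (hVi : IntegrableOn V (Ioi 0))
    (hV'i : IntegrableOn (derivWithin V (Ici 0)) (Ioi 0))
    (hV''i : IntegrableOn (derivWithin (derivWithin V (Ici 0)) (Ici 0)) (Ioi 0)) :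
    halfLineFourier (fun x => (V x : ℂ)) t
      = ((V 0 : ℂ) + ((derivWithin V (Ici 0) 0 : ℝ)
          + halfLineFourier
            (fun x => ((derivWithin (derivWithin V (Ici 0)) (Ici 0) x : ℝ) : ℂ)) t)
          / (I * t)) / (I * t) := by
  have hV' : ContDiffOn ℝ 1 (derivWithin V (Ici 0)) (Ici 0) :=
    hV.derivWithin (uniqueDiffOn_Ici 0) (by norm_num)
  rw [halfLineFourier_ofReal_eq_of_differentiableOn ht (hV.differentiableOn two_ne_zero)
      hVi hV'i,
    halfLineFourier_ofReal_eq_of_differentiableOn ht (hV'.differentiableOn one_ne_zero)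
      hV'i hV''i]

theorem mul_four_sq_mul_mul_sub_one_eq (z a b : ℂ) (hz : z ≠ 0) :
    z * (4 * z ^ 2 * ((1 + a / (I * (2 * z))) / (I * (2 * z)))
      * ((1 + b / (I * -(2 * z))) / (I * -(2 * z))) - 1)
      = I * (b - a) / 2 + a * b * z⁻¹ / 4 := by
  field_simp
  linear_combination
    (-64 * z ^ 2 * I ^ 2 + (1 - I ^ 2) * (32 * z * I * (b - a) + 16 * a * b)) * I_sq

theorem fourier_halfLine_main_asymptotic_general (V : ℝ → ℝ)
    (hV : ContDiffOn ℝ 2 V (Set.Ici (0:ℝ)))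
    (hV0 : V 0 = 1)
    (hV'0 : derivWithin V (Set.Ici (0:ℝ)) 0 = 0)
    (hVint : IntegrableOn V (Set.Ioi (0:ℝ)))
    (hV'int : IntegrableOn (derivWithin V (Set.Ici (0:ℝ))) (Set.Ioi (0:ℝ)))
    (hV''int : IntegrableOn (derivWithin (derivWithin V (Set.Ici (0:ℝ))) (Set.Ici (0:ℝ)))
      (Set.Ioi (0:ℝ)))
    (Vhat : ℂ → ℂ)
    (hVhat : ∀ z : ℂ, Vhat z = ∫ x in Set.Ioi (0:ℝ), (V x : ℂ) * Complex.exp (-Complex.I * z * x)) :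
    Filter.Tendsto
      (fun z : ℝ => (z : ℂ) * (4 * (z : ℂ)^2 * Vhat (2 * z) * Vhat (-(2 * z)) - 1))
      Filter.atTop (nhds 0) := by
  set W := halfLineFourier fun x => ((derivWithin (derivWithin V (Ici 0)) (Ici 0) x : ℝ) : ℂ)
  have hVhat_eq (t : ℝ) (ht : t ≠ 0) : Vhat t = (1 + W t / (I * t)) / (I * t) := by
    rw [hVhat, ← halfLineFourier, halfLineFourier_ofReal_eq_of_contDiffOn_two ht hV hVint hV'int
      hV''int, hV0, hV'0]
    push_cast
    ring
  have h2z : Tendsto (fun z : ℝ => 2 * z) atTop (cocompact ℝ) :=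
    (tendsto_id.const_mul_atTop two_pos).mono_right atTop_le_cocompact
  have hWpos : Tendsto (fun z : ℝ => W (2 * z)) atTop (𝓝 0) :=
    (tendsto_halfLineFourier_cocompact _).comp h2z
  have hWneg : Tendsto (fun z : ℝ => W (-(2 * z))) atTop (𝓝 0) :=
    (tendsto_halfLineFourier_cocompact _).comp
      ((tendsto_neg_atTop_atBot.comp (tendsto_id.const_mul_atTop two_pos)).mono_right
        atBot_le_cocompact)
  have hinv : Tendsto (fun z : ℝ => (z : ℂ)⁻¹) atTop (𝓝 0) :=
    tendsto_inv₀_cobounded.comp (RCLike.tendsto_ofReal_atTop_cobounded ℂ)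
  have hlim := ((hWneg.sub hWpos).const_mul I).div_const 2 |>.add
    (((hWpos.mul hWneg).mul hinv).div_const 4)
  simp only [sub_self, mul_zero, zero_div, add_zero] at hlim
  refine hlim.congr' ?_
  filter_upwards [eventually_ne_atTop 0] with z hz
  rw [← mul_four_sq_mul_mul_sub_one_eq _ _ _ (ofReal_ne_zero.mpr hz)]
  have h1 := hVhat_eq (2 * z) (by positivity)
  have h2 := hVhat_eq (-(2 * z)) (by simpa using hz)
  push_cast at h1 h2
  rw [h1, h2]

/-- For `V` of class `C²` on `[0,∞)` with `V(0)=1`, `V'(0)=0`, `V, V', V''` integrable and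
`V, V' → 0` at infinity, the half-line Fourier transform `V̂(z) = ∫_0^∞ V(x)e^{-izx} dx`
satisfies `4z²·V̂(2z)·V̂(−2z) = 1 + o(1/z)` as real `z → ∞`:
`z·(4z²·V̂(2z)·V̂(−2z) − 1) → 0` as `z → +∞`. -/
theorem fourier_halfLine_main_asymptotic (V : ℝ → ℝ)
    (hV : ContDiffOn ℝ 2 V (Set.Ici (0:ℝ)))
    (hV0 : V 0 = 1)
    (hV'0 : derivWithin V (Set.Ici (0:ℝ)) 0 = 0)
    (hVint : IntegrableOn V (Set.Ioi (0:ℝ)))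
    (hV'int : IntegrableOn (derivWithin V (Set.Ici (0:ℝ))) (Set.Ioi (0:ℝ)))
    (hV''int : IntegrableOn (derivWithin (derivWithin V (Set.Ici (0:ℝ))) (Set.Ici (0:ℝ)))
      (Set.Ioi (0:ℝ)))
    (hVlim : Filter.Tendsto V Filter.atTop (nhds 0))
    (hV'lim : Filter.Tendsto (derivWithin V (Set.Ici (0:ℝ))) Filter.atTop (nhds 0))
    (Vhat : ℂ → ℂ)
    (hVhat : ∀ z : ℂ, Vhat z = ∫ x in Set.Ioi (0:ℝ), (V x : ℂ) * Complex.exp (-Complex.I * z * x)) :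
    Filter.Tendsto
      (fun z : ℝ => (z : ℂ) * (4 * (z : ℂ)^2 * Vhat (2 * z) * Vhat (-(2 * z)) - 1))
      Filter.atTop (nhds 0) :=
  fourier_halfLine_main_asymptotic_general V hV hV0 hV'0 hVint hV'int hV''int Vhat hVhat
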